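/- The symplectic group Sp(2n, F_2) is generated by symplectic transvections: the subgroup of Sp(2n, F_2) generated by the set of all matrices of transvections {Z_h : h ∈ F_2^{2n}} equals the whole group Sp(2n, F_2). -/

import Mathlib

open Matrix Finset

/-- `Λ(n)`: the `2n × 2n` block-diagonal matrix over `F₂` that is the direct sum of
`n` copies of `[[0,1],[1,0]]`. -/
def Lam (n : ℕ) : Matrix (Fin (2 * n)) (Fin (2 * n)) (ZMod 2) :=
  Matrix.of fun i j => if i.val / 2 = j.val / 2 ∧ i ≠ j then 1 else 0

/-- The symplectic inner product `⟨v, w⟩ = vᵀ Λ(n) w` on `F₂^{2n}`. -/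
def sip {n : ℕ} (v w : Fin (2 * n) → ZMod 2) : ZMod 2 :=
  v ⬝ᵥ (Lam n).mulVec w

/-- `Sp(2n, F₂)`: the set of `2n × 2n` matrices `S` over `F₂` with `S Λ(n) Sᵀ = Λ(n)`. -/
def Sp (n : ℕ) : Set (Matrix (Fin (2 * n)) (Fin (2 * n)) (ZMod 2)) :=
  {S | S * Lam n * Sᵀ = Lam n}

/-- The matrix of the symplectic transvection `Z_h`, so that
`(ZtMat h).mulVec v = v + ⟨v, h⟩ h`. -/
def ZtMat {n : ℕ} (h : Fin (2 * n) → ZMod 2) : Matrix (Fin (2 * n)) (Fin (2 * n)) (ZMod 2) :=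
  1 + Matrix.of fun i j => h i * (Lam n).mulVec h j

/-!
Over `F₂`, transvections `Z_h` with `h` in a nondegenerate subspace `P` act transitively on
nonzero vectors of `P`: `Z_{u+v}` sends `u` to `v` when `⟨u, v⟩ = 1`, and otherwise one passes
through a vector `w` with `⟨u, w⟩ = ⟨v, w⟩ = 1`. A second round of transvections, fixing the image
of the first vector, makes them transitive on hyperbolic pairs of `P`, and they fix `P^⊥`
pointwise. Taking for `P` the vectors vanishing on the first `2k` coordinates, a symplectic
matrix is multiplied by transvections until it fixes `e₁, …, e₂ₙ`, i.e. becomes the identity.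
-/

abbrev Vec (n : ℕ) := Fin (2 * n) → ZMod 2
abbrev Mat (n : ℕ) := Matrix (Fin (2 * n)) (Fin (2 * n)) (ZMod 2)

instance {m R : Type*} [Fintype m] [DecidableEq m] [Semiring R] :
    DistribMulAction (Matrix m m R)ˣ (m → R) where
  smul g v := (g : Matrix m m R) *ᵥ v
  one_smul := one_mulVec
  mul_smul g g' v := (mulVec_mulVec v (g : Matrix m m R) g').symm
  smul_zero _ := mulVec_zero _
  smul_add _ := mulVec_add _

section

variable {n : ℕ}

/-- `i xor 1`: the other coordinate of the hyperbolic pair `{2m, 2m + 1}` containing `i`. -/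
def partner (i : Fin (2 * n)) : Fin (2 * n) :=
  ⟨if i.val % 2 = 0 then i.val + 1 else i.val - 1, by have := i.isLt; split <;> omega⟩

lemma partner_partner (i : Fin (2 * n)) : partner (partner i) = i := by
  ext; simp only [partner]; split <;> split <;> omega

lemma partner_ne (i : Fin (2 * n)) : partner i ≠ i := by
  simp only [partner, ne_eq, Fin.ext_iff]; split <;> omega

lemma partner_val_lt_iff (i : Fin (2 * n)) (k : ℕ) : (partner i).val < 2 * k ↔ i.val < 2 * k := by
  simp only [partner]; split <;> omega

lemma Lam_apply (i j : Fin (2 * n)) : Lam n i j = if j = partner i then 1 else 0 := by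
  simp only [Lam, of_apply, partner, ne_eq, Fin.ext_iff]
  congr 1
  split <;> (apply propext; omega)

lemma Lam_mulVec (w : Vec n) : Lam n *ᵥ w = w ∘ partner := by
  ext i
  simp [mulVec, dotProduct, Lam_apply]

lemma Lam_mul_Lam : Lam n * Lam n = 1 :=
  ext_iff_mulVec.mpr fun w => by
    simp only [← mulVec_mulVec, Lam_mulVec, one_mulVec, Function.comp_assoc]
    ext i; simp [partner_partner]

lemma ZMod.eq_zero_or_eq_one (a : ZMod 2) : a = 0 ∨ a = 1 := by revert a; decide

lemma Vec.add_self (v : Vec n) : v + v = 0 := funext fun i => CharTwo.add_self_eq_zero (v i)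

lemma sip_eq_sum (v w : Vec n) : sip v w = ∑ i, v i * w (partner i) := by
  simp [sip, Lam_mulVec, dotProduct]

lemma sip_add_left (u v w : Vec n) : sip (u + v) w = sip u w + sip v w := add_dotProduct _ _ _

lemma sip_add_right (u v w : Vec n) : sip u (v + w) = sip u v + sip u w := by
  simp [sip, mulVec_add]

lemma sip_smul_left (c : ZMod 2) (v w : Vec n) : sip (c • v) w = c * sip v w :=
  smul_dotProduct _ _ _

lemma sip_smul_right (c : ZMod 2) (v w : Vec n) : sip v (c • w) = c * sip v w := by
  simp [sip, mulVec_smul]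

lemma single_sip (i : Fin (2 * n)) (v : Vec n) : sip (Pi.single i 1) v = v (partner i) := by
  rw [sip, single_one_dotProduct, Lam_mulVec, Function.comp_apply]

lemma sip_self (v : Vec n) : sip v v = 0 := by
  rw [sip_eq_sum]
  refine Finset.sum_involution (fun i _ => partner i) (fun i _ => ?_) (fun i _ _ => partner_ne i)
    (fun i _ => Finset.mem_univ _) (fun i _ => partner_partner i)
  rw [partner_partner, mul_comm, CharTwo.add_self_eq_zero]

lemma sip_comm (v w : Vec n) : sip v w = sip w v := by
  have := sip_self (v + w)
  rw [sip_add_left, sip_add_right, sip_add_right, sip_self, sip_self, zero_add, add_zero] at this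
  exact CharTwo.add_eq_zero.mp this

lemma mul_Lam_mul_eq_Lam_comm {A B : Mat n} : A * Lam n * B = Lam n ↔ B * Lam n * A = Lam n := by
  have key : ∀ A B : Mat n, A * Lam n * B = Lam n ↔ A * Lam n * (B * Lam n) = 1 := fun A B => by
    rw [← Matrix.mul_assoc]
    constructor
    · intro h; rw [h, Lam_mul_Lam]
    · intro h; rw [← Matrix.mul_one (A * Lam n * B), ← Lam_mul_Lam, ← Matrix.mul_assoc, h,
        Matrix.one_mul]
  rw [key, key, mul_eq_one_comm]

lemma sip_mulVec_mulVec (S : Mat n) (v w : Vec n) :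
    sip (S *ᵥ v) (S *ᵥ w) = v ⬝ᵥ (Sᵀ * Lam n * S) *ᵥ w := by
  rw [sip, ← vecMul_transpose, ← dotProduct_mulVec, mulVec_mulVec, mulVec_mulVec]

lemma mem_Sp_iff_sip {S : Mat n} : S ∈ Sp n ↔ ∀ v w, sip (S *ᵥ v) (S *ᵥ w) = sip v w := by
  rw [show S ∈ Sp n ↔ Sᵀ * Lam n * S = Lam n from mul_Lam_mul_eq_Lam_comm]
  simp only [sip_mulVec_mulVec]
  refine ⟨fun h v w => by rw [h, sip], fun h => ?_⟩
  ext i j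
  simpa [sip, single_one_dotProduct, mulVec_single_one] using h (Pi.single i 1) (Pi.single j 1)

variable (n) in
def SpGroup : Subgroup (Mat n)ˣ where
  carrier := {g | ∀ v w : Vec n, sip (g • v) (g • w) = sip v w}
  one_mem' v w := by rw [one_smul, one_smul]
  mul_mem' {g g'} hg hg' v w := by rw [mul_smul, mul_smul, hg, hg']
  inv_mem' {g} hg v w := by rw [← hg, smul_inv_smul, smul_inv_smul]

lemma coe_SpGroup : (SpGroup n : Set (Mat n)ˣ) = {g : (Mat n)ˣ | (g : Mat n) ∈ Sp n} := by
  ext g; exact mem_Sp_iff_sip.symm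

lemma ZtMat_mulVec (h v : Vec n) : ZtMat h *ᵥ v = v + sip v h • h := by
  simp only [ZtMat, add_mulVec, one_mulVec]
  congr 1
  ext i
  simp only [mulVec, dotProduct, of_apply, sip, Finset.sum_mul, Pi.smul_apply, smul_eq_mul]
  exact Finset.sum_congr rfl fun j _ => by ring

lemma ZtMat_mul_self (h : Vec n) : ZtMat h * ZtMat h = 1 :=
  ext_iff_mulVec.mpr fun v => by
    rw [← mulVec_mulVec, ZtMat_mulVec, ZtMat_mulVec, one_mulVec, sip_add_left, sip_smul_left,
      sip_self, mul_zero, add_zero, add_assoc, Vec.add_self, add_zero]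

def transvectionUnit (h : Vec n) : (Mat n)ˣ :=
  ⟨ZtMat h, ZtMat h, ZtMat_mul_self h, ZtMat_mul_self h⟩

lemma transvectionUnit_smul (h v : Vec n) : transvectionUnit h • v = v + sip v h • h :=
  ZtMat_mulVec h v

lemma transvectionUnit_inv (h : Vec n) : (transvectionUnit h)⁻¹ = transvectionUnit h :=
  inv_eq_of_mul_eq_one_left (Units.ext (ZtMat_mul_self h))

lemma transvectionUnit_mem_SpGroup (h : Vec n) : transvectionUnit h ∈ SpGroup n := by
  intro v w
  simp only [transvectionUnit_smul, sip_add_left, sip_add_right, sip_smul_left, sip_smul_right,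
    sip_self, sip_comm h w]
  linear_combination (sip v h * sip w h) * CharTwo.two_eq_zero (R := ZMod 2)

lemma transvectionUnit_smul_of_sip_eq_zero {h v : Vec n} (hv : sip v h = 0) :
    transvectionUnit h • v = v := by
  rw [transvectionUnit_smul, hv, zero_smul, add_zero]

lemma transvectionUnit_add_smul {u v : Vec n} (huv : sip u v = 1) :
    transvectionUnit (u + v) • u = v := by
  rw [transvectionUnit_smul, sip_add_right, sip_self, huv, zero_add, one_smul, ← add_assoc,
    Vec.add_self, zero_add]

def transvectionSubgroup (P : Submodule (ZMod 2) (Vec n)) : Subgroup (Mat n)ˣ :=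
  Subgroup.closure (transvectionUnit '' P)

lemma transvectionUnit_mem {P : Submodule (ZMod 2) (Vec n)} {h : Vec n} (hh : h ∈ P) :
    transvectionUnit h ∈ transvectionSubgroup P :=
  Subgroup.subset_closure ⟨h, hh, rfl⟩

lemma transvectionSubgroup_mono {P Q : Submodule (ZMod 2) (Vec n)} (hPQ : P ≤ Q) :
    transvectionSubgroup P ≤ transvectionSubgroup Q :=
  Subgroup.closure_mono (Set.image_mono hPQ)

lemma transvectionSubgroup_le_SpGroup (P : Submodule (ZMod 2) (Vec n)) :
    transvectionSubgroup P ≤ SpGroup n :=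
  (Subgroup.closure_le _).mpr <| Set.image_subset_iff.mpr fun h _ => transvectionUnit_mem_SpGroup h

lemma transvectionUnit_smul_mem {P : Submodule (ZMod 2) (Vec n)} {h v : Vec n} (hh : h ∈ P)
    (hv : v ∈ P) : transvectionUnit h • v ∈ P := by
  rw [transvectionUnit_smul]
  exact P.add_mem hv (P.smul_mem _ hh)

lemma smul_mem_of_mem_transvectionSubgroup {P : Submodule (ZMod 2) (Vec n)} {g : (Mat n)ˣ}
    (hg : g ∈ transvectionSubgroup P) {v : Vec n} (hv : v ∈ P) : g • v ∈ P := by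
  induction hg using Subgroup.closure_induction'' generalizing v with
  | mem _ hx =>
    obtain ⟨h, hh, rfl⟩ := hx
    exact transvectionUnit_smul_mem hh hv
  | inv_mem _ hx =>
    obtain ⟨h, hh, rfl⟩ := hx
    exact (transvectionUnit_inv h).symm ▸ transvectionUnit_smul_mem hh hv
  | one => rwa [one_smul]
  | mul _ _ _ _ ihx ihy => rw [mul_smul]; exact ihx (ihy hv)

lemma smul_eq_of_mem_transvectionSubgroup {P : Submodule (ZMod 2) (Vec n)} {g : (Mat n)ˣ}
    (hg : g ∈ transvectionSubgroup P) {x : Vec n} (hx : ∀ h ∈ P, sip x h = 0) : g • x = x := by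
  suffices transvectionSubgroup P ≤ MulAction.stabilizer (Mat n)ˣ x from this hg
  exact (Subgroup.closure_le _).mpr <| Set.image_subset_iff.mpr fun h hh =>
    transvectionUnit_smul_of_sip_eq_zero (hx h hh)

def IsNondegenerate (P : Submodule (ZMod 2) (Vec n)) : Prop :=
  ∀ u ∈ P, u ≠ 0 → ∃ w ∈ P, sip u w = 1

lemma transvectionUnit_mul_transvectionUnit_smul {u w v : Vec n} (huw : sip u w = 1)
    (hwv : sip w v = 1) : (transvectionUnit (w + v) * transvectionUnit (u + w)) • u = v := by
  rw [mul_smul, transvectionUnit_add_smul huw, transvectionUnit_add_smul hwv]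

theorem IsNondegenerate.exists_smul_eq {P : Submodule (ZMod 2) (Vec n)} (hP : IsNondegenerate P)
    {u v : Vec n} (hu : u ∈ P) (hv : v ∈ P) (hu0 : u ≠ 0) (hv0 : v ≠ 0) :
    ∃ g ∈ transvectionSubgroup P, g • u = v := by
  rcases ZMod.eq_zero_or_eq_one (sip u v) with huv | huv
  · obtain ⟨a, ha, hua⟩ := hP u hu hu0
    obtain ⟨b, hb, hvb⟩ := hP v hv hv0
    obtain ⟨w, hw, huw, hvw⟩ : ∃ w ∈ P, sip u w = 1 ∧ sip v w = 1 := by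
      rcases ZMod.eq_zero_or_eq_one (sip v a) with hva | hva
      · rcases ZMod.eq_zero_or_eq_one (sip u b) with hub | hub
        · refine ⟨a + b, P.add_mem ha hb, ?_, ?_⟩ <;> simp [sip_add_right, *]
        · exact ⟨b, hb, hub, hvb⟩
      · exact ⟨a, ha, hua, hva⟩
    exact ⟨_, Subgroup.mul_mem _ (transvectionUnit_mem (P.add_mem hw hv))
      (transvectionUnit_mem (P.add_mem hu hw)),
      transvectionUnit_mul_transvectionUnit_smul huw (by rwa [sip_comm])⟩
  · exact ⟨_, transvectionUnit_mem (P.add_mem hu hv), transvectionUnit_add_smul huv⟩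

theorem IsNondegenerate.exists_smul_eq_and_smul_eq {P : Submodule (ZMod 2) (Vec n)}
    (hP : IsNondegenerate P) {u₁ u₂ v₁ v₂ : Vec n} (hu₁ : u₁ ∈ P) (hu₂ : u₂ ∈ P) (hv₁ : v₁ ∈ P)
    (hv₂ : v₂ ∈ P) (hu : sip u₁ u₂ = 1) (hv : sip v₁ v₂ = 1) :
    ∃ g ∈ transvectionSubgroup P, g • u₁ = v₁ ∧ g • u₂ = v₂ := by
  have ne_zero {x y : Vec n} (h : sip x y = 1) : x ≠ 0 := by
    rintro rfl; simp [sip] at h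
  obtain ⟨g₁, hg₁, hgu₁⟩ := hP.exists_smul_eq hu₁ hv₁ (ne_zero hu) (ne_zero hv)
  set u := g₁ • u₂
  have hu' : u ∈ P := smul_mem_of_mem_transvectionSubgroup hg₁ hu₂
  have hv₁u : sip v₁ u = 1 := by rw [← hgu₁, transvectionSubgroup_le_SpGroup P hg₁, hu]
  suffices ∃ g₂ ∈ transvectionSubgroup P, g₂ • v₁ = v₁ ∧ g₂ • u = v₂ by
    obtain ⟨g₂, hg₂, hfix, hmove⟩ := this
    exact ⟨g₂ * g₁, Subgroup.mul_mem _ hg₂ hg₁, by rw [mul_smul, hgu₁, hfix],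
      by rw [mul_smul, hmove]⟩
  rcases ZMod.eq_zero_or_eq_one (sip u v₂) with huv | huv
  · have hw : v₁ + v₂ ∈ P := P.add_mem hv₁ hv₂
    refine ⟨_, Subgroup.mul_mem _ (transvectionUnit_mem (P.add_mem hw hv₂))
      (transvectionUnit_mem (P.add_mem hu' hw)), ?_,
      transvectionUnit_mul_transvectionUnit_smul
        (by rw [sip_add_right, huv, add_zero, sip_comm, hv₁u])
        (by rw [sip_add_left, sip_self, hv, add_zero])⟩
    have h₁ : sip v₁ (u + (v₁ + v₂)) = 0 := by
      rw [sip_add_right, sip_add_right, hv₁u, sip_self, hv]; decide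
    have h₂ : sip v₁ (v₁ + v₂ + v₂) = 0 := by rw [add_assoc, Vec.add_self, add_zero, sip_self]
    rw [mul_smul, transvectionUnit_smul_of_sip_eq_zero h₁, transvectionUnit_smul_of_sip_eq_zero h₂]
  · refine ⟨_, transvectionUnit_mem (P.add_mem hu' hv₂), ?_, transvectionUnit_add_smul huv⟩
    apply transvectionUnit_smul_of_sip_eq_zero
    rw [sip_add_right, hv₁u, hv, CharTwo.add_self_eq_zero]

variable (n) in
def vanishingBelow (k : ℕ) : Submodule (ZMod 2) (Vec n) where
  carrier := {v | ∀ i : Fin (2 * n), i.val < 2 * k → v i = 0}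
  add_mem' hu hv i hi := by simp [hu i hi, hv i hi]
  zero_mem' _ _ := rfl
  smul_mem' c v hv i hi := by simp [hv i hi]

lemma single_mem_vanishingBelow {k : ℕ} {i : Fin (2 * n)} (hi : 2 * k ≤ i.val) :
    (Pi.single i 1 : Vec n) ∈ vanishingBelow n k := fun j hj =>
  Pi.single_eq_of_ne (fun h => by subst h; omega) _

lemma single_sip_eq_zero_of_mem_vanishingBelow {k : ℕ} {v : Vec n} (hv : v ∈ vanishingBelow n k)
    {i : Fin (2 * n)} (hi : i.val < 2 * k) : sip (Pi.single i 1) v = 0 := by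
  rw [single_sip]; exact hv _ ((partner_val_lt_iff i k).mpr hi)

lemma isNondegenerate_vanishingBelow (k : ℕ) : IsNondegenerate (vanishingBelow n k) := by
  intro u hu hu0
  obtain ⟨i, hi⟩ := Function.ne_iff.mp hu0
  have hik : 2 * k ≤ i.val := not_lt.mp fun h => hi (hu i h)
  refine ⟨Pi.single (partner i) 1,
    single_mem_vanishingBelow (not_lt.mp ((partner_val_lt_iff i k).not.mpr (not_lt.mpr hik))), ?_⟩
  rw [sip_comm, single_sip, partner_partner]
  exact (ZMod.eq_zero_or_eq_one _).resolve_left hi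

lemma exists_mul_smul_single_eq_single_succ {g : (Mat n)ˣ} (hg : g ∈ SpGroup n) {k : ℕ}
    (hk : k < n) (hfix : ∀ i : Fin (2 * n), i.val < 2 * k →
      g • (Pi.single i 1 : Vec n) = Pi.single i 1) :
    ∃ t ∈ transvectionSubgroup (vanishingBelow n k), ∀ i : Fin (2 * n), i.val < 2 * (k + 1) →
      (t * g) • (Pi.single i 1 : Vec n) = Pi.single i 1 := by
  set a : Fin (2 * n) := ⟨2 * k, by omega⟩
  set b : Fin (2 * n) := ⟨2 * k + 1, by omega⟩
  have hab : sip (Pi.single a 1 : Vec n) (Pi.single b 1) = 1 := by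
    rw [single_sip, show partner a = b by ext; simp [a, b, partner]]
    exact Pi.single_eq_same _ _
  have smul_mem {x : Fin (2 * n)} (hx : 2 * k ≤ x.val) :
      g • (Pi.single x 1 : Vec n) ∈ vanishingBelow n k := fun j hj => by
    calc (g • (Pi.single x 1 : Vec n)) j
        = sip (Pi.single (partner j) 1) (g • (Pi.single x 1 : Vec n)) := by
          rw [single_sip, partner_partner]
      _ = sip (g • Pi.single (partner j) 1) (g • (Pi.single x 1 : Vec n)) := by
          rw [hfix _ ((partner_val_lt_iff j k).mpr hj)]
      _ = 0 := by
          rw [hg, single_sip, partner_partner, Pi.single_eq_of_ne (fun h => by subst h; omega)]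
  obtain ⟨t, ht, hta, htb⟩ := (isNondegenerate_vanishingBelow k).exists_smul_eq_and_smul_eq
    (smul_mem le_rfl) (smul_mem (Nat.le_succ _)) (single_mem_vanishingBelow le_rfl)
    (single_mem_vanishingBelow (Nat.le_succ _)) (by rw [hg, hab]) hab
  refine ⟨t, ht, fun i hi => ?_⟩
  rw [mul_smul]
  rcases (show i.val < 2 * k ∨ i = a ∨ i = b by simp only [Fin.ext_iff, a, b]; omega)
    with hik | rfl | rfl
  · rw [hfix i hik]
    exact smul_eq_of_mem_transvectionSubgroup ht fun h hh =>
      single_sip_eq_zero_of_mem_vanishingBelow hh hik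
  · exact hta
  · exact htb

lemma exists_mul_smul_single_eq_single {g : (Mat n)ˣ} (hg : g ∈ SpGroup n) {k : ℕ} (hk : k ≤ n) :
    ∃ t ∈ transvectionSubgroup ⊤, ∀ i : Fin (2 * n), i.val < 2 * k →
      (t * g) • (Pi.single i 1 : Vec n) = Pi.single i 1 := by
  induction k with
  | zero => exact ⟨1, Subgroup.one_mem _, fun i hi => absurd hi (by omega)⟩
  | succ k ih =>
    obtain ⟨t, ht, hfix⟩ := ih (by omega)
    obtain ⟨t', ht', hfix'⟩ := exists_mul_smul_single_eq_single_succ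
      (Subgroup.mul_mem _ (transvectionSubgroup_le_SpGroup _ ht) hg) hk hfix
    refine ⟨t' * t, Subgroup.mul_mem _ (transvectionSubgroup_mono le_top ht') ht, ?_⟩
    simpa only [mul_assoc] using hfix'

lemma transvectionSubgroup_top :
    transvectionSubgroup (⊤ : Submodule (ZMod 2) (Vec n)) = SpGroup n := by
  refine le_antisymm (transvectionSubgroup_le_SpGroup ⊤) fun g hg => ?_
  obtain ⟨t, ht, hfix⟩ := exists_mul_smul_single_eq_single hg le_rfl
  have htg : t * g = 1 := Units.ext <| ext_of_mulVec_single fun i =>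
    (hfix i i.isLt).trans (one_mulVec _).symm
  rw [eq_inv_of_mul_eq_one_right htg]
  exact Subgroup.inv_mem _ ht

end

/-- `Sp(2n, F₂)` is generated by symplectic transvections: the subgroup (of the units
of the matrix ring) generated by the transvection matrices equals the whole group
`Sp(2n, F₂)`. -/
theorem sp_generated_by_transvections (n : ℕ) :
    (Subgroup.closure {u : (Matrix (Fin (2 * n)) (Fin (2 * n)) (ZMod 2))ˣ |
        ∃ h, (u : Matrix (Fin (2 * n)) (Fin (2 * n)) (ZMod 2)) = ZtMat h} : Set _) =
      {u : (Matrix (Fin (2 * n)) (Fin (2 * n)) (ZMod 2))ˣ |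
        (u : Matrix (Fin (2 * n)) (Fin (2 * n)) (ZMod 2)) ∈ Sp n} := by
  have hgen : {u : (Mat n)ˣ | ∃ h, (u : Mat n) = ZtMat h} =
      transvectionUnit '' (⊤ : Submodule (ZMod 2) (Vec n)) := by
    ext u
    simp [Units.ext_iff, eq_comm, transvectionUnit]
  rw [hgen, ← coe_SpGroup, ← transvectionSubgroup_top]
  rfl
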